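/- Let H be a finite simple graph and let G be any trigraph on the same vertex set with E(G) ∪ R(G) = E(H) (that is, G is obtained from H by recoloring an arbitrary subset of its edges red). Then tww(G) ≤ tww(H) + Δ(H), where Δ(H) is the maximum degree of H. -/

import Mathlib

/-- A trigraph: a finite vertex set with disjoint black and red edge sets. -/
structure Trigraph (V : Type*) where
  verts : Finset V
  black : V → V → Prop
  red : V → V → Prop
  black_symm : ∀ u v, black u v → black v u
  red_symm : ∀ u v, red u v → red v u
  black_irrefl : ∀ u, ¬ black u u
  red_irrefl : ∀ u, ¬ red u u
  black_red_disjoint : ∀ u v, black u v → ¬ red u v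
  black_mem : ∀ u v, black u v → u ∈ verts ∧ v ∈ verts
  red_mem : ∀ u v, red u v → u ∈ verts ∧ v ∈ verts

namespace Trigraph

variable {V : Type*} [DecidableEq V]

/-- The red degree of a vertex. -/
noncomputable def redDeg (G : Trigraph V) (x : V) : ℕ := {y | G.red x y}.ncard

/-- `G` is a `d`-trigraph: every vertex is incident to at most `d` red edges. -/
def RedDegLE (G : Trigraph V) (d : ℕ) : Prop := ∀ x, G.redDeg x ≤ d

/-- `G'` is obtained from `G` by contracting the two distinct vertices `u` and `v`
(the contracted vertex is represented by `u`, and `v` is deleted). -/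
def IsContractionAt (G G' : Trigraph V) (u v : V) : Prop :=
  u ∈ G.verts ∧ v ∈ G.verts ∧ u ≠ v ∧
  G'.verts = G.verts.erase v ∧
  (∀ x y, x ≠ u → y ≠ u → (G'.black x y ↔ (G.black x y ∧ x ≠ v ∧ y ≠ v))) ∧
  (∀ x y, x ≠ u → y ≠ u → (G'.red x y ↔ (G.red x y ∧ x ≠ v ∧ y ≠ v))) ∧
  (∀ x, x ≠ u → x ≠ v → (G'.black u x ↔ (G.black u x ∧ G.black v x))) ∧
  (∀ x, x ≠ u → x ≠ v →
    (G'.red u x ↔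
      ((G.black u x ∨ G.red u x ∨ G.black v x ∨ G.red v x) ∧ ¬ (G.black u x ∧ G.black v x))))

/-- `G'` is obtained from `G` by contracting some pair of vertices. -/
def IsContraction (G G' : Trigraph V) : Prop := ∃ u v, IsContractionAt G G' u v

/-- `G` admits a `d`-sequence: a sequence `G = G_n, …, G_1` of `d`-trigraphs, each obtained
from the previous one by a contraction, ending in a one-vertex trigraph. -/
def HasSeq (G : Trigraph V) (d : ℕ) : Prop :=
  ∃ f : ℕ → Trigraph V,
    f G.verts.card = G ∧
    (∀ i, 1 ≤ i → i < G.verts.card → IsContraction (f (i + 1)) (f i)) ∧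
    (∀ i, 1 ≤ i → i ≤ G.verts.card → (f i).RedDegLE d)

/-- The twin-width of a trigraph: the least `d` such that it admits a `d`-sequence. -/
noncomputable def tww (G : Trigraph V) : ℕ := sInf {d | G.HasSeq d}

end Trigraph

/-- The trigraph induced by a simple graph `G` on the vertex set `s`: all edges black. -/
def SimpleGraph.toTrigraphOn {V : Type*} (G : SimpleGraph V) (s : Finset V) : Trigraph V where
  verts := s
  black u v := G.Adj u v ∧ u ∈ s ∧ v ∈ s
  red _ _ := False
  black_symm := fun _ _ ⟨h, hu, hv⟩ => ⟨h.symm, hv, hu⟩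
  red_symm := fun _ _ h => h.elim
  black_irrefl := fun u h => G.loopless.irrefl u h.1
  red_irrefl := fun _ h => h
  black_red_disjoint := fun _ _ _ h => h
  black_mem := fun _ _ ⟨_, hu, hv⟩ => ⟨hu, hv⟩
  red_mem := fun _ _ h => h.elim

/-- The trigraph associated to a finite simple graph: all edges black. -/
def SimpleGraph.toTrigraph {V : Type*} [Fintype V] (G : SimpleGraph V) : Trigraph V :=
  G.toTrigraphOn Finset.univ

/-- The maximum degree of a finite simple graph. -/
noncomputable def maxDeg {W : Type*} [Fintype W] (H : SimpleGraph W) : ℕ :=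
  Finset.univ.sup fun v => {u | H.Adj v u}.ncard

/-!
A contraction sequence amounts to a sequence of ever coarser partitions of `V`: the trigraph at
each step is the quotient of the original one by the current partition, two parts being joined
black when all pairs between them are black, and red when some but not all of these pairs are
edges. Run the partitions of a `d`-sequence of `H` on `G` instead. As `G` and `H` have the same
edges, a red edge `XY` of a quotient of `G` is either red in the quotient of `H`, or black
there, and then the representatives of `X` and `Y` are adjacent in `H`. So red degrees grow by
at most `Δ(H)`.
-/

theorem eq_of_forall_ne_of_symm {V : Type*} {r₁ r₂ : V → V → Prop} {u : V}
    (h₁ : ∀ x y, r₁ x y → r₁ y x) (h₂ : ∀ x y, r₂ x y → r₂ y x) (hu₁ : ¬ r₁ u u)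
    (hu₂ : ¬ r₂ u u) (hne : ∀ x y, x ≠ u → y ≠ u → (r₁ x y ↔ r₂ x y))
    (hu : ∀ x, x ≠ u → (r₁ u x ↔ r₂ u x)) : r₁ = r₂ := by
  funext x y
  apply propext
  by_cases hx : x = u <;> by_cases hy : y = u
  · subst hx hy; exact iff_of_false hu₁ hu₂
  · subst hx; exact hu y hy
  · subst hy; exact ⟨fun h => h₂ _ _ ((hu x hx).1 (h₁ _ _ h)),
      fun h => h₁ _ _ ((hu x hx).2 (h₂ _ _ h))⟩
  · exact hne x y hx hy

namespace Trigraph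

section

variable {V : Type*}

theorem ext {T₁ T₂ : Trigraph V} (hv : T₁.verts = T₂.verts) (hb : T₁.black = T₂.black)
    (hr : T₁.red = T₂.red) : T₁ = T₂ := by
  cases T₁; cases T₂; cases hv; cases hb; cases hr; rfl

theorem finite_setOf_black (T : Trigraph V) (x : V) : {y | T.black x y}.Finite :=
  T.verts.finite_toSet.subset fun y h => (T.black_mem x y h).2

theorem finite_setOf_red (T : Trigraph V) (x : V) : {y | T.red x y}.Finite :=
  T.verts.finite_toSet.subset fun y h => (T.red_mem x y h).2

def IsBlackComplete (T : Trigraph V) (A B : Set V) : Prop := ∀ a ∈ A, ∀ b ∈ B, T.black a b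

def HasEdgeBetween (T : Trigraph V) (A B : Set V) : Prop :=
  ∃ a ∈ A, ∃ b ∈ B, T.black a b ∨ T.red a b

variable {T : Trigraph V} {A B C : Set V}

theorem IsBlackComplete.symm (h : T.IsBlackComplete A B) : T.IsBlackComplete B A :=
  fun b hb a ha => T.black_symm _ _ (h a ha b hb)

theorem HasEdgeBetween.symm (h : T.HasEdgeBetween A B) : T.HasEdgeBetween B A :=
  let ⟨a, ha, b, hb, hab⟩ := h
  ⟨b, hb, a, ha, hab.imp (T.black_symm _ _) (T.red_symm _ _)⟩

theorem isBlackComplete_union_left :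
    T.IsBlackComplete (A ∪ B) C ↔ T.IsBlackComplete A C ∧ T.IsBlackComplete B C := by
  simp only [IsBlackComplete, Set.mem_union, or_imp, forall_and]

theorem hasEdgeBetween_union_left :
    T.HasEdgeBetween (A ∪ B) C ↔ T.HasEdgeBetween A C ∨ T.HasEdgeBetween B C := by
  simp only [HasEdgeBetween, Set.mem_union, or_and_right, exists_or]

theorem isBlackComplete_singleton {x y : V} : T.IsBlackComplete {x} {y} ↔ T.black x y := by
  simp [IsBlackComplete]

theorem hasEdgeBetween_singleton {x y : V} :
    T.HasEdgeBetween {x} {y} ↔ T.black x y ∨ T.red x y := by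
  simp [HasEdgeBetween]

/-- The quotient of `T` by the partition of `V` into the fibres of `p`, the part `p ⁻¹' {x}`
being represented by the vertex `x`; only the parts represented in `s` are kept. -/
def quotientBy (T : Trigraph V) (p : V → V) (s : Finset V) : Trigraph V where
  verts := s
  black x y := x ∈ s ∧ y ∈ s ∧ x ≠ y ∧ T.IsBlackComplete (p ⁻¹' {x}) (p ⁻¹' {y})
  red x y := x ∈ s ∧ y ∈ s ∧ x ≠ y ∧ T.HasEdgeBetween (p ⁻¹' {x}) (p ⁻¹' {y}) ∧
    ¬ T.IsBlackComplete (p ⁻¹' {x}) (p ⁻¹' {y})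
  black_symm := fun _ _ ⟨hx, hy, hne, h⟩ => ⟨hy, hx, hne.symm, h.symm⟩
  red_symm := fun _ _ ⟨hx, hy, hne, he, hb⟩ => ⟨hy, hx, hne.symm, he.symm, fun h => hb h.symm⟩
  black_irrefl := fun _ h => h.2.2.1 rfl
  red_irrefl := fun _ h => h.2.2.1 rfl
  black_red_disjoint := fun _ _ hb hr => hr.2.2.2.2 hb.2.2.2
  black_mem := fun _ _ h => ⟨h.1, h.2.1⟩
  red_mem := fun _ _ h => ⟨h.1, h.2.1⟩

theorem quotientBy_id (T : Trigraph V) : T.quotientBy id T.verts = T := by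
  refine ext rfl ?_ ?_ <;> funext x y <;> apply propext <;>
    simp only [quotientBy, Set.preimage_id, isBlackComplete_singleton, hasEdgeBetween_singleton]
  · exact ⟨fun h => h.2.2.2, fun h =>
      ⟨(T.black_mem x y h).1, (T.black_mem x y h).2, fun he => T.black_irrefl x (he ▸ h), h⟩⟩
  · exact ⟨fun h => h.2.2.2.1.resolve_left h.2.2.2.2, fun h =>
      ⟨(T.red_mem x y h).1, (T.red_mem x y h).2, fun he => T.red_irrefl x (he ▸ h), Or.inr h,
        fun hb => T.black_red_disjoint x y hb h⟩⟩

variable {G K : Trigraph V} {p : V → V} {s : Finset V}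

theorem quotientBy_red_imp (hGK : ∀ a b, G.black a b ∨ G.red a b → K.black a b ∨ K.red a b)
    (hp : ∀ x ∈ s, p x = x) {x y : V} (h : (G.quotientBy p s).red x y) :
    (K.quotientBy p s).red x y ∨ K.black x y := by
  obtain ⟨hx, hy, hne, ⟨a, ha, b, hb, hab⟩, -⟩ := h
  by_cases hK : K.IsBlackComplete (p ⁻¹' {x}) (p ⁻¹' {y})
  · exact Or.inr (hK x (hp x hx) y (hp y hy))
  · exact Or.inl ⟨hx, hy, hne, ⟨a, ha, b, hb, hGK a b hab⟩, hK⟩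

theorem RedDegLE.quotientBy {d e : ℕ}
    (hGK : ∀ a b, G.black a b ∨ G.red a b → K.black a b ∨ K.red a b)
    (he : ∀ x, {y | K.black x y}.ncard ≤ e) (hp : ∀ x ∈ s, p x = x)
    (hK : (K.quotientBy p s).RedDegLE d) : (G.quotientBy p s).RedDegLE (d + e) := fun x =>
  calc (G.quotientBy p s).redDeg x
      ≤ ({y | (K.quotientBy p s).red x y} ∪ {y | K.black x y}).ncard :=
        Set.ncard_le_ncard (fun _ => quotientBy_red_imp hGK hp)
          ((finite_setOf_red _ x).union (finite_setOf_black K x))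
    _ ≤ (K.quotientBy p s).redDeg x + {y | K.black x y}.ncard := Set.ncard_union_le _ _
    _ ≤ d + e := add_le_add (hK x) (he x)

end

variable {V : Type*} [DecidableEq V] {T T' : Trigraph V} {u v : V} {d : ℕ}

theorem IsContractionAt.card_verts (h : IsContractionAt T T' u v) :
    T'.verts.card + 1 = T.verts.card := by
  rw [h.2.2.2.1, Finset.card_erase_add_one h.2.1]

theorem IsContractionAt.unique {T₁ T₂ : Trigraph V} (h₁ : IsContractionAt T T₁ u v)
    (h₂ : IsContractionAt T T₂ u v) : T₁ = T₂ := by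
  obtain ⟨-, -, -, hV₁, hb₁, hr₁, hbu₁, hru₁⟩ := h₁
  obtain ⟨-, -, -, hV₂, hb₂, hr₂, hbu₂, hru₂⟩ := h₂
  have hv₁ : v ∉ T₁.verts := by simp [hV₁]
  have hv₂ : v ∉ T₂.verts := by simp [hV₂]
  refine ext (hV₁.trans hV₂.symm) ?_ ?_
  · refine eq_of_forall_ne_of_symm T₁.black_symm T₂.black_symm (T₁.black_irrefl u)
      (T₂.black_irrefl u) (fun x y hx hy => (hb₁ x y hx hy).trans (hb₂ x y hx hy).symm)
      fun x hx => ?_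
    by_cases hxv : x = v
    · subst hxv
      exact iff_of_false (fun h => hv₁ (T₁.black_mem _ _ h).2) fun h => hv₂ (T₂.black_mem _ _ h).2
    · exact (hbu₁ x hx hxv).trans (hbu₂ x hx hxv).symm
  · refine eq_of_forall_ne_of_symm T₁.red_symm T₂.red_symm (T₁.red_irrefl u)
      (T₂.red_irrefl u) (fun x y hx hy => (hr₁ x y hx hy).trans (hr₂ x y hx hy).symm)
      fun x hx => ?_
    by_cases hxv : x = v
    · subst hxv
      exact iff_of_false (fun h => hv₁ (T₁.red_mem _ _ h).2) fun h => hv₂ (T₂.red_mem _ _ h).2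
    · exact (hru₁ x hx hxv).trans (hru₂ x hx hxv).symm

theorem HasSeq.redDegLE (h : T.HasSeq d) : T.RedDegLE d := by
  obtain ⟨f, hfT, -, hf⟩ := h
  rcases Nat.eq_zero_or_pos T.verts.card with h0 | h0
  · intro x
    have : {y | T.red x y} = ∅ := Set.eq_empty_of_forall_notMem fun y hy => by
      simpa [Finset.card_eq_zero.1 h0] using (T.red_mem x y hy).1
    simp [redDeg, this]
  · rw [← hfT]
    exact hf _ h0 le_rfl

theorem hasSeq_of_card_le_one (hT : T.verts.card ≤ 1) (hd : T.RedDegLE d) : T.HasSeq d :=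
  ⟨fun _ => T, rfl, fun _ _ _ => by omega, fun _ _ _ => hd⟩

theorem HasSeq.of_isContraction (hc : IsContraction T T') (h : T'.HasSeq d)
    (hd : T.RedDegLE d) : T.HasSeq d := by
  obtain ⟨u, v, huv⟩ := hc
  have hcard := huv.card_verts
  obtain ⟨f, hfT, hfc, hfd⟩ := h
  refine ⟨Function.update f T.verts.card T, Function.update_self .., fun i hi hiT => ?_,
    fun i hi hiT => ?_⟩
  · rw [Function.update_of_ne (a := i) (by omega)]
    rcases (by omega : i = T'.verts.card ∨ i < T'.verts.card) with rfl | hi'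
    · rw [hcard, Function.update_self, hfT]
      exact ⟨u, v, huv⟩
    · rw [Function.update_of_ne (by omega)]
      exact hfc i hi hi'
  · by_cases hiT' : i = T.verts.card
    · rw [hiT', Function.update_self]
      exact hd
    · rw [Function.update_of_ne hiT']
      exact hfd i hi (by omega)

theorem HasSeq.exists_isContraction (h : T.HasSeq d) (hT : 2 ≤ T.verts.card) :
    ∃ T', IsContraction T T' ∧ T'.HasSeq d := by
  obtain ⟨f, hfT, hfc, hfd⟩ := h
  obtain ⟨n, hn⟩ := Nat.exists_eq_add_of_le' (by omega : 1 ≤ T.verts.card)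
  have hc : IsContraction T (f n) := by
    rw [← hfT, hn]
    exact hfc n (by omega) (by omega)
  obtain ⟨u, v, huv⟩ := hc
  have hcard : (f n).verts.card = n := by have := huv.card_verts; omega
  exact ⟨f n, ⟨u, v, huv⟩, f, by rw [hcard], fun i hi hin => hfc i hi (by omega),
    fun i hi hin => hfd i hi (by omega)⟩

def mergeRep (p : V → V) (u v : V) : V → V := fun a => if p a = v then u else p a

theorem preimage_mergeRep_of_ne {p : V → V} {x : V} (hxu : x ≠ u) (hxv : x ≠ v) :
    mergeRep p u v ⁻¹' {x} = p ⁻¹' {x} := by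
  ext a
  simp only [mergeRep, Set.mem_preimage, Set.mem_singleton_iff]
  split_ifs with h
  · exact iff_of_false (Ne.symm hxu) (h ▸ Ne.symm hxv)
  · rfl

theorem preimage_mergeRep_self (p : V → V) (u v : V) :
    mergeRep p u v ⁻¹' {u} = p ⁻¹' {u} ∪ p ⁻¹' {v} := by
  ext a
  simp only [mergeRep, Set.mem_preimage, Set.mem_singleton_iff, Set.mem_union]
  split_ifs with h <;> simp [h]

theorem mergeRep_eq_self_of_mem_erase {p : V → V} {s : Finset V} (hp : ∀ x ∈ s, p x = x) :
    ∀ x ∈ s.erase v, mergeRep p u v x = x := by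
  intro x hx
  rw [Finset.mem_erase] at hx
  simp [mergeRep, hp x hx.2, hx.1]

theorem quotientBy_isContractionAt (T : Trigraph V) {p : V → V} {s : Finset V}
    (hp : ∀ x ∈ s, p x = x) (hu : u ∈ s) (hv : v ∈ s) (huv : u ≠ v) :
    IsContractionAt (T.quotientBy p s) (T.quotientBy (mergeRep p u v) (s.erase v)) u v := by
  refine ⟨hu, hv, huv, rfl, fun x y hxu hyu => ?_, fun x y hxu hyu => ?_, fun x hxu hxv => ?_,
    fun x hxu hxv => ?_⟩
  · by_cases hxv : x = v
    · subst hxv; simp [quotientBy]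
    by_cases hyv : y = v
    · subst hyv; simp [quotientBy]
    simp only [quotientBy, Finset.mem_erase, preimage_mergeRep_of_ne hxu hxv,
      preimage_mergeRep_of_ne hyu hyv]
    tauto
  · by_cases hxv : x = v
    · subst hxv; simp [quotientBy]
    by_cases hyv : y = v
    · subst hyv; simp [quotientBy]
    simp only [quotientBy, Finset.mem_erase, preimage_mergeRep_of_ne hxu hxv,
      preimage_mergeRep_of_ne hyu hyv]
    tauto
  · simp only [quotientBy, Finset.mem_erase, preimage_mergeRep_self,
      preimage_mergeRep_of_ne hxu hxv, isBlackComplete_union_left]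
    have := Ne.symm hxu
    have := Ne.symm hxv
    tauto
  · by_cases hxs : x ∈ s
    · have hedge : ∀ w ∈ s, T.IsBlackComplete (p ⁻¹' {w}) (p ⁻¹' {x}) →
          T.HasEdgeBetween (p ⁻¹' {w}) (p ⁻¹' {x}) := fun w hw h =>
        ⟨w, hp w hw, x, hp x hxs, Or.inl (h w (hp w hw) x (hp x hxs))⟩
      have hu' := hedge u hu
      have hv' := hedge v hv
      simp only [quotientBy, Finset.mem_erase, preimage_mergeRep_self,
        preimage_mergeRep_of_ne hxu hxv, isBlackComplete_union_left, hasEdgeBetween_union_left]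
      have := Ne.symm hxu
      have := Ne.symm hxv
      tauto
    · simp [quotientBy, hxs]

theorem hasSeq_quotientBy_natCard [Finite V] (T : Trigraph V) {p : V → V} {s : Finset V}
    (hp : ∀ x ∈ s, p x = x) : (T.quotientBy p s).HasSeq (Nat.card V) := by
  induction s using Finset.strongInduction generalizing p with
  | H s ih =>
    have hd : (T.quotientBy p s).RedDegLE (Nat.card V) := fun x => Set.ncard_le_card _
    by_cases hs : s.card ≤ 1
    · exact hasSeq_of_card_le_one hs hd
    obtain ⟨u, hu, v, hv, huv⟩ := Finset.one_lt_card.1 (show 1 < s.card by omega)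
    exact HasSeq.of_isContraction ⟨u, v, T.quotientBy_isContractionAt hp hu hv huv⟩
      (ih _ (Finset.erase_ssubset hv) (mergeRep_eq_self_of_mem_erase hp)) hd

theorem exists_hasSeq [Finite V] (T : Trigraph V) : ∃ d, T.HasSeq d :=
  ⟨Nat.card V, T.quotientBy_id ▸ T.hasSeq_quotientBy_natCard fun _ _ => rfl⟩

theorem hasSeq_quotientBy_of_hasSeq {G K : Trigraph V} {p : V → V} {s : Finset V} {e : ℕ}
    (hGK : ∀ a b, G.black a b ∨ G.red a b → K.black a b ∨ K.red a b)
    (he : ∀ x, {y | K.black x y}.ncard ≤ e) (hp : ∀ x ∈ s, p x = x)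
    (hK : (K.quotientBy p s).HasSeq d) : (G.quotientBy p s).HasSeq (d + e) := by
  induction s using Finset.strongInduction generalizing p with
  | H s ih =>
    have hd := hK.redDegLE.quotientBy hGK he hp
    by_cases hs : s.card ≤ 1
    · exact hasSeq_of_card_le_one hs hd
    obtain ⟨T', ⟨u, v, hc⟩, hT'⟩ := hK.exists_isContraction (show 2 ≤ s.card by omega)
    obtain ⟨hu, hv, huv, -⟩ := id hc
    rw [hc.unique (K.quotientBy_isContractionAt hp hu hv huv)] at hT'
    exact HasSeq.of_isContraction ⟨u, v, G.quotientBy_isContractionAt hp hu hv huv⟩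
      (ih _ (Finset.erase_ssubset hv) (mergeRep_eq_self_of_mem_erase hp) hT') hd

end Trigraph

theorem SimpleGraph.ncard_adj_le_maxDeg {V : Type*} [Fintype V] (H : SimpleGraph V) (v : V) :
    {u | H.Adj v u}.ncard ≤ maxDeg H :=
  Finset.le_sup (f := fun v => {u | H.Adj v u}.ncard) (Finset.mem_univ v)

theorem twin_width_trigraph_over_graph {V : Type*} [Fintype V] [DecidableEq V]
    (H : SimpleGraph V) (G : Trigraph V)
    (hverts : G.verts = Finset.univ)
    (hedges : ∀ u v, (G.black u v ∨ G.red u v) ↔ H.Adj u v) :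
    Trigraph.tww G ≤ Trigraph.tww H.toTrigraph + maxDeg H := by
  have hGH : ∀ a b, G.black a b ∨ G.red a b → H.toTrigraph.black a b ∨ H.toTrigraph.red a b :=
    fun a b h => Or.inl ⟨(hedges a b).1 h, Finset.mem_univ a, Finset.mem_univ b⟩
  have hΔ : ∀ x, {y | H.toTrigraph.black x y}.ncard ≤ maxDeg H := fun x =>
    (Set.ncard_le_ncard (fun _ h => h.1) (Set.toFinite _)).trans (H.ncard_adj_le_maxDeg x)
  have hH : H.toTrigraph.HasSeq (Trigraph.tww H.toTrigraph) :=
    Nat.sInf_mem (Trigraph.exists_hasSeq H.toTrigraph)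
  have hG := Trigraph.hasSeq_quotientBy_of_hasSeq (s := H.toTrigraph.verts) (p := id) hGH hΔ
    (fun _ _ => rfl) (by rwa [Trigraph.quotientBy_id])
  rw [show H.toTrigraph.verts = G.verts from hverts.symm, Trigraph.quotientBy_id] at hG
  exact Nat.sInf_le hG
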